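/- Let t₁ be an indexed red-black tree of black height n₁, a a key, and t₂ an indexed red-black tree of black height n₂, with n₁ > n₂. Then the cost of JoinRight(t₁, a, t₂), i.e., the number of recursive calls it performs, is at most 1 + 2(n₁ − n₂). -/
import Mathlib


/-- Node colors for red-black trees. -/
inductive Color where
  | red : Color
  | black : Color
deriving DecidableEq

/-- Plain binary trees with colored nodes. -/
inductive RBTree (α : Type) where
  | leaf : RBTree α
  | node : Color → RBTree α → α → RBTree α → RBTree α

namespace RBTree

variable {α : Type}

/-- The black height of a tree (computed along the left spine). -/
def blackHeight : RBTree α → ℕ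
  | leaf => 0
  | node Color.red l _ _ => blackHeight l
  | node Color.black l _ _ => blackHeight l + 1

/-- The color of the root; leaves count as black. -/
def rootColor : RBTree α → Color
  | leaf => Color.black
  | node c _ _ _ => c

/-- In-order traversal. -/
def inorder : RBTree α → List α
  | leaf => []
  | node _ l a r => inorder l ++ a :: inorder r

/-- Number of internal (key-carrying) nodes. -/
def size : RBTree α → ℕ
  | leaf => 0
  | node _ l _ r => size l + 1 + size r

/-- `IsRBT t y n` means `t` is a valid red-black tree with root color `y`
and black height `n`, mirroring the indexed inductive family `irbt`. -/
inductive IsRBT : RBTree α → Color → ℕ → Prop where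
  | leaf : IsRBT leaf Color.black 0
  | red {t₁ t₂ : RBTree α} {n : ℕ} (a : α) :
      IsRBT t₁ Color.black n → IsRBT t₂ Color.black n →
      IsRBT (node Color.red t₁ a t₂) Color.red n
  | black {t₁ t₂ : RBTree α} {y₁ y₂ : Color} {n : ℕ} (a : α) :
      IsRBT t₁ y₁ n → IsRBT t₂ y₂ n →
      IsRBT (node Color.black t₁ a t₂) Color.black (n + 1)

end RBTree
namespace RBTree

variable {α : Type}

/-- The cost of `JoinRight`: the number of recursive invocations of
`JoinRight` performed (each recursive call incurs unit cost; the
non-recursive rebalancing cases incur zero cost). -/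
def joinRightCost : RBTree α → α → RBTree α → ℕ
  | leaf, _, _ => 0
  | node Color.red _ _ t₁₂, a, t₂ => 1 + joinRightCost t₁₂ a t₂
  | node Color.black t₁₁ a₁ t₁₂, a, t₂ =>
      if blackHeight (node Color.black t₁₁ a₁ t₁₂) = blackHeight t₂ + 1 then 0
      else 1 + joinRightCost t₁₂ a t₂

/-- The cost of `JoinLeft`, symmetrically. -/
def joinLeftCost : RBTree α → α → RBTree α → ℕ
  | _, _, leaf => 0
  | t₁, a, node Color.red t₂₁ _ _ => 1 + joinLeftCost t₁ a t₂₁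
  | t₁, a, node Color.black t₂₁ a₂ t₂₂ =>
      if blackHeight (node Color.black t₂₁ a₂ t₂₂) = blackHeight t₁ + 1 then 0
      else 1 + joinLeftCost t₁ a t₂₁

/-- The cost of `Join`: the number of recursive invocations of
`JoinRight`/`JoinLeft` performed (the equal-height case and the final
recoloring incur zero cost). -/
def joinCost (t₁ : RBTree α) (a : α) (t₂ : RBTree α) : ℕ :=
  if blackHeight t₂ < blackHeight t₁ then joinRightCost t₁ a t₂
  else if blackHeight t₁ < blackHeight t₂ then joinLeftCost t₁ a t₂
  else 0

end RBTree
lemma RBTree.blackHeight_eq {α : Type} {t : RBTree α} {y : Color} {n : ℕ}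
    (h : RBTree.IsRBT t y n) : RBTree.blackHeight t = n := by
  induction h with
  | leaf => rfl
  | red a h1 h2 ih1 ih2 => simpa [RBTree.blackHeight] using ih1
  | black a h1 h2 ih1 ih2 => simp [RBTree.blackHeight, ih1]

lemma RBTree.joinRight_cost_aux {α : Type} {y₁ : Color} {n₁ n₂ : ℕ}
    (t₁ : RBTree α) (a : α) (t₂ : RBTree α)
    (h₁ : RBTree.IsRBT t₁ y₁ n₁) (hbh : RBTree.blackHeight t₂ = n₂)
    (hn : n₂ < n₁) :
    RBTree.joinRightCost t₁ a t₂ + (if y₁ = Color.black then 1 else 0)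
      ≤ 2 * (n₁ - n₂) := by
  induction h₁ with
  | leaf => omega
  | red x h1 h2 ih1 ih2 =>
      simp only [RBTree.joinRightCost]
      have := ih2 hn
      simp at this ⊢
      omega
  | @black l r c₁ c₂ n x h1 h2 ih1 ih2 =>
      simp only [RBTree.joinRightCost, RBTree.blackHeight,
        RBTree.blackHeight_eq h1, hbh]
      by_cases hc : n + 1 = n₂ + 1
      · simp only [hc, if_true, reduceIte]; omega
      · simp only [hc, if_false, reduceIte]
        have hn' : n₂ < n := by omega
        have := ih2 hn'
        split at this <;> omega

/-- **Cost of JoinRight.**  Let `t₁` be a red-black tree of black height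
`n₁`, `a` a key, and `t₂` a red-black tree of black height `n₂`, with
`n₁ > n₂`.  Then the cost of `JoinRight(t₁, a, t₂)` — the number of
recursive calls it performs — is at most `1 + 2 * (n₁ - n₂)`. -/
theorem joinRight_cost_bound {α : Type} {y₁ y₂ : Color} {n₁ n₂ : ℕ}
    (t₁ : RBTree α) (a : α) (t₂ : RBTree α)
    (h₁ : RBTree.IsRBT t₁ y₁ n₁) (h₂ : RBTree.IsRBT t₂ y₂ n₂)
    (hn : n₁ > n₂) :
    RBTree.joinRightCost t₁ a t₂ ≤ 1 + 2 * (n₁ - n₂) := by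
  have := RBTree.joinRight_cost_aux t₁ a t₂ h₁ (RBTree.blackHeight_eq h₂) hn
  split at this <;> omega
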